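/- Let q > 2 be real, let r' ∈ ℝ^m have nonnegative entries, and set t_e = (r'_e)^{1/(q−2)} for each e. Then for every ζ ∈ ℝ^m, (1/(2q))·γ_q(t,ζ) ≤ ∑_{e=1}^m r'_e ζ_e² + (1/2)‖ζ‖_q^q ≤ 3·γ_q(t,ζ). -/

import Mathlib

/-!
Both sides split over coordinates, so it suffices to compare `γ_q(t, x)` with
`t^{q-2} x² + |x|^q / 2` for a single pair of reals, where `t^{q-2} = r'`.
If `|x| ≤ t` then `|x|^q ≤ t^{q-2} x²`, so both quantities are comparable to `t^{q-2} x²`;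
if `|x| > t` then `t^q ≤ t^{q-2} x² ≤ |x|^q`, so both are comparable to `|x|^q`.
-/

/-- The per-coordinate smoothed power function
`γ_q(t,x) = (q/2)t^{q−2}x²` if `|x| ≤ t`, and `|x|^q + (q/2 − 1)t^q` otherwise. -/
noncomputable def gam (q t x : ℝ) : ℝ :=
  if |x| ≤ t then q / 2 * t ^ (q - 2) * x ^ 2 else |x| ^ q + (q / 2 - 1) * t ^ q

namespace Real

lemma rpow_eq_rpow_sub_two_mul_sq {s q : ℝ} (hs : 0 ≤ s) (hq : q ≠ 0) :
    s ^ q = s ^ (q - 2) * s ^ 2 := by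
  rw [← rpow_natCast, ← rpow_add' hs (by simpa using hq)]
  norm_num

lemma abs_rpow_le_rpow_sub_two_mul_sq {q t x : ℝ} (hq : 2 ≤ q) (h : |x| ≤ t) :
    |x| ^ q ≤ t ^ (q - 2) * x ^ 2 := by
  rw [rpow_eq_rpow_sub_two_mul_sq (abs_nonneg x) (by linarith), sq_abs]
  gcongr

lemma rpow_le_rpow_sub_two_mul_sq_le_abs_rpow {q t x : ℝ} (hq : 2 ≤ q) (ht : 0 ≤ t)
    (h : t ≤ |x|) : t ^ q ≤ t ^ (q - 2) * x ^ 2 ∧ t ^ (q - 2) * x ^ 2 ≤ |x| ^ q := by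
  have hq0 : q ≠ 0 := by linarith
  rw [rpow_eq_rpow_sub_two_mul_sq ht hq0, rpow_eq_rpow_sub_two_mul_sq (abs_nonneg x) hq0,
    sq_abs]
  constructor
  · have : t ^ 2 ≤ x ^ 2 := sq_abs x ▸ pow_le_pow_left₀ ht h 2
    gcongr
  · gcongr

end Real

lemma gam_comparison {q t : ℝ} (hq : 2 ≤ q) (ht : 0 ≤ t) (x : ℝ) :
    1 / (2 * q) * gam q t x ≤ t ^ (q - 2) * x ^ 2 + 1 / 2 * |x| ^ q ∧
      t ^ (q - 2) * x ^ 2 + 1 / 2 * |x| ^ q ≤ 3 * gam q t x := by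
  have hq0 : 0 < q := by linarith
  have hquad : 0 ≤ t ^ (q - 2) * x ^ 2 := by positivity
  have hpow : 0 ≤ |x| ^ q := by positivity
  rw [div_mul_eq_mul_div, one_mul, div_le_iff₀ (by positivity)]
  unfold gam
  split_ifs with h
  · have := Real.abs_rpow_le_rpow_sub_two_mul_sq hq h
    constructor <;> nlinarith
  · obtain ⟨hlow, hhigh⟩ := Real.rpow_le_rpow_sub_two_mul_sq_le_abs_rpow hq ht (by linarith)
    have : 0 ≤ t ^ q := by positivity
    constructor <;> nlinarith

/-- comparison inequality in Lemma 5.1, Smoothed2Gamma. -/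
theorem stmt_13 {m : ℕ} {q : ℝ} (hq : 2 < q) (r' : Fin m → ℝ) (hr' : ∀ e, 0 ≤ r' e)
    (t : Fin m → ℝ) (ht : ∀ e, t e = r' e ^ (1 / (q - 2))) (ζ : Fin m → ℝ) :
    1 / (2 * q) * (∑ e, gam q (t e) (ζ e))
        ≤ (∑ e, r' e * ζ e ^ 2) + 1 / 2 * (∑ e, |ζ e| ^ q) ∧
      (∑ e, r' e * ζ e ^ 2) + 1 / 2 * (∑ e, |ζ e| ^ q)
        ≤ 3 * ∑ e, gam q (t e) (ζ e) := by
  have hcoord (e : Fin m) :=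
    gam_comparison hq.le (t := t e) (ht e ▸ Real.rpow_nonneg (hr' e) _) (ζ e)
  have hr'_eq (e : Fin m) : t e ^ (q - 2) = r' e := by
    rw [ht e, one_div, Real.rpow_inv_rpow (hr' e) (by linarith)]
  simp only [hr'_eq] at hcoord
  rw [Finset.mul_sum, Finset.mul_sum, Finset.mul_sum, ← Finset.sum_add_distrib]
  exact ⟨Finset.sum_le_sum fun e _ => (hcoord e).1, Finset.sum_le_sum fun e _ => (hcoord e).2⟩
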